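/- Assume the action set I of player 1 is a singleton. Define 𝓛₀ = P(K∖T), 𝓛_{n+1} = Φ(𝓛ₙ) and 𝓚ₙ = P(K∖T) ∖ 𝓛ₙ. Then for every n ∈ ℕ, every support L ∈ 𝓚ₙ, every initial distribution δ with support L and every strategy τ of player 2, the probability (under δ, the unique strategy of player 1, and τ) that the play visits T at some step m with 2 ≤ m ≤ n+1 is strictly positive. -/

import Mathlib

open scoped Classical

noncomputable section

/-- A probability distribution on a finite type, given by a nonnegative
real-valued density summing to `1`. -/
structure FDist (X : Type*) [Fintype X] where
  f : X → ℝ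
  nonneg : ∀ x, 0 ≤ f x
  sum_one : ∑ x, f x = 1

/-- The support of a distribution: the set of points with positive probability. -/
def FDist.support {X : Type*} [Fintype X] (δ : FDist X) : Finset X :=
  Finset.univ.filter fun x => 0 < δ.f x

/-- The uniform distribution on a nonempty finite set. -/
def uniform {X : Type*} [Fintype X] (L : Finset X) (hL : L.Nonempty) : FDist X where
  f x := if x ∈ L then (L.card : ℝ)⁻¹ else 0
  nonneg x := by split_ifs <;> positivity
  sum_one := by
    rw [Finset.sum_ite_mem, Finset.univ_inter, Finset.sum_const, nsmul_eq_mul,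
      mul_inv_cancel₀]
    exact_mod_cast (Finset.card_pos.mpr hL).ne'

/-- Uniform distribution on `L`, defaulting to the uniform distribution on the
whole type when `L` is empty. -/
def uniformD {X : Type*} [Fintype X] [Nonempty X] (L : Finset X) : FDist X :=
  if h : L.Nonempty then uniform L h else uniform Finset.univ Finset.univ_nonempty

/-- The Dirac distribution on a point. -/
def dirac {X : Type*} [Fintype X] (x : X) : FDist X where
  f y := if y = x then 1 else 0
  nonneg y := by by_cases h : y = x <;> simp [h]
  sum_one := by simp

/-- A stochastic game with partial observation on both sides and a reachability
objective for player 1: states `K`, actions `I`, `J`, signals `C`, `D`, target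
states `T`, transition probabilities `p`, and actions encoded in signals via
`act₁`, `act₂`. -/
structure Game (K I J C D : Type*) [Fintype K] [Fintype I] [Fintype J] [Fintype C] [Fintype D] where
  T : Finset K
  p : K → I → J → C × D × K → ℝ
  p_nonneg : ∀ k i j x, 0 ≤ p k i j x
  p_sum : ∀ k i j, ∑ x : C × D × K, p k i j x = 1
  act₁ : C → I
  act₂ : D → J
  act_compat : ∀ k i j c d l, 0 < p k i j (c, d, l) → i = act₁ c ∧ j = act₂ d

/-- A (behavioral) strategy of player 1: a distribution on actions for each
finite sequence of received signals. -/
abbrev Strategy1 (I C : Type*) [Fintype I] : Type _ := List C → FDist I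

/-- A (behavioral) strategy of player 2. -/
abbrev Strategy2 (J D : Type*) [Fintype J] : Type _ := List D → FDist J

/-- A play with `n+1` states: the initial state followed by `n` steps, each
consisting of a signal for player 1, a signal for player 2 and the next state. -/
structure Hist (K C D : Type*) (n : ℕ) where
  first : K
  steps : Fin n → C × D × K

instance (K C D : Type*) [Fintype K] [Fintype C] [Fintype D] (n : ℕ) :
    Fintype (Hist K C D n) :=
  Fintype.ofEquiv (K × (Fin n → C × D × K))
    { toFun := fun x => ⟨x.1, x.2⟩
      invFun := fun h => (h.first, h.steps)
      left_inv := fun _ => rfl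
      right_inv := fun _ => rfl }

namespace Hist

variable {K C D : Type*}

/-- The last state of a play. -/
def last : ∀ {n : ℕ}, Hist K C D n → K
  | 0, h => h.first
  | n + 1, h => (h.steps (Fin.last n)).2.2

/-- The play obtained by removing the last step. -/
def init {n : ℕ} (h : Hist K C D (n + 1)) : Hist K C D n :=
  ⟨h.first, fun m => h.steps m.castSucc⟩

/-- The `m`-th state of a play, `0`-indexed: `state h 0` is the initial state
(called `k₁` in `1`-indexed notation). -/
def state {n : ℕ} (h : Hist K C D n) (m : Fin (n + 1)) : K :=
  if hm : m.val = 0 then h.first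
  else (h.steps ⟨m.val - 1, by have := m.isLt; omega⟩).2.2

/-- The sequence of signals received by player 1 along the play. -/
def sig1 {n : ℕ} (h : Hist K C D n) : List C := List.ofFn fun m => (h.steps m).1

/-- The sequence of signals received by player 2 along the play. -/
def sig2 {n : ℕ} (h : Hist K C D n) : List D := List.ofFn fun m => (h.steps m).2.1

/-- The play visits the target set `T`. -/
def visits (T : Finset K) {n : ℕ} (h : Hist K C D n) : Prop :=
  ∃ m : Fin (n + 1), h.state m ∈ T

end Hist

namespace Game

variable {K I J C D : Type*} [Fintype K] [Fintype I] [Fintype J] [Fintype C] [Fintype D]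

/-- The probability of a given play of `n` steps, under initial distribution `δ`
and strategies `σ`, `τ`. -/
def playProb (G : Game K I J C D) (δ : FDist K) (σ : Strategy1 I C) (τ : Strategy2 J D) :
    ∀ n : ℕ, Hist K C D n → ℝ
  | 0, h => δ.f h.first
  | n + 1, h =>
      G.playProb δ σ τ n h.init *
        ∑ i : I, ∑ j : J,
          (σ h.init.sig1).f i * (τ h.init.sig2).f j *
            G.p h.init.last i j (h.steps (Fin.last n))

/-- The probability that a play with `n+1` states visits the target set. -/
def reachProb (G : Game K I J C D) (δ : FDist K) (σ : Strategy1 I C)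
    (τ : Strategy2 J D) (n : ℕ) : ℝ :=
  ∑ h : Hist K C D n, if h.visits G.T then G.playProb δ σ τ n h else 0

/-- The reachability probability `γ₁(δ,σ,τ)`: the supremum over horizons of the
probability that the play visits the target set. -/
def val (G : Game K I J C D) (δ : FDist K) (σ : Strategy1 I C) (τ : Strategy2 J D) : ℝ :=
  ⨆ n : ℕ, G.reachProb δ σ τ n

/-- `δ` is almost-surely winning for player 1. -/
def AlmostSureWin1 (G : Game K I J C D) (δ : FDist K) : Prop :=
  ∃ σ, ∀ τ, G.val δ σ τ = 1

/-- `δ` is positively winning for player 1. -/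
def PositiveWin1 (G : Game K I J C D) (δ : FDist K) : Prop :=
  ∃ σ, ∀ τ, 0 < G.val δ σ τ

/-- `δ` is positively winning for player 2. -/
def PositiveWin2 (G : Game K I J C D) (δ : FDist K) : Prop :=
  ∃ τ, ∀ σ, G.val δ σ τ < 1

/-- `δ` is surely (equivalently here, almost-surely) winning for player 2. -/
def SureWin2 (G : Game K I J C D) (δ : FDist K) : Prop :=
  ∃ τ, ∀ σ, G.val δ σ τ = 0

/-- One-step belief operator of player 1. -/
def B1 (G : Game K I J C D) (L : Finset K) (c : C) : Finset K :=
  Finset.univ.filter fun k => ∃ l ∈ L, ∃ d : D, 0 < G.p l (G.act₁ c) (G.act₂ d) (c, d, k)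

/-- One-step belief operator of player 2. -/
def B2 (G : Game K I J C D) (L : Finset K) (d : D) : Finset K :=
  Finset.univ.filter fun k => ∃ l ∈ L, ∃ c : C, 0 < G.p l (G.act₁ c) (G.act₂ d) (c, d, k)

/-- Belief of player 1 after a sequence of signals. -/
def B1seq (G : Game K I J C D) (L : Finset K) (cs : List C) : Finset K := cs.foldl G.B1 L

/-- Belief of player 2 after a sequence of signals. -/
def B2seq (G : Game K I J C D) (L : Finset K) (ds : List D) : Finset K := ds.foldl G.B2 L

/-- One-step pessimistic belief operator of player 1. -/
def B1p (G : Game K I J C D) (L : Finset K) (c : C) : Finset K := G.B1 (L \ G.T) c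

/-- One-step pessimistic belief operator of player 2. -/
def B2p (G : Game K I J C D) (L : Finset K) (d : D) : Finset K := G.B2 (L \ G.T) d

/-- Pessimistic belief of player 1 after a sequence of signals. -/
def B1pseq (G : Game K I J C D) (L : Finset K) (cs : List C) : Finset K := cs.foldl G.B1p L

/-- Pessimistic belief of player 2 after a sequence of signals. -/
def B2pseq (G : Game K I J C D) (L : Finset K) (ds : List D) : Finset K := ds.foldl G.B2p L

/-- The operator `Φ` on collections of subsets of `K ∖ T`. -/
def Phi (G : Game K I J C D) (𝓛 : Set (Finset K)) : Set (Finset K) :=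
  {L | L ∈ 𝓛 ∧ L ∩ G.T = ∅ ∧ ∃ j : J, ∀ d : D, G.act₂ d = j → G.B2 L d ∈ 𝓛}

theorem Phi_mono (G : Game K I J C D) : Monotone G.Phi := by
  intro A B hAB L hL
  obtain ⟨h1, h2, j, hj⟩ := hL
  exact ⟨hAB h1, h2, j, fun d hd => hAB (hj d hd)⟩

/-- `𝓛_∞`, the greatest fixpoint of `Φ`. -/
def Linf (G : Game K I J C D) : Set (Finset K) :=
  OrderHom.gfp ⟨G.Phi, G.Phi_mono⟩

/-- The winning condition of the `𝓛`-game for player 1, on a play with initial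
support `L`: some state `k_m` is a target state and all earlier pessimistic
beliefs of player 1 avoid `𝓛`. -/
def LWin (G : Game K I J C D) (𝓛 : Set (Finset K)) (L : Finset K) {n : ℕ}
    (h : Hist K C D n) : Prop :=
  ∃ m : Fin (n + 1), h.state m ∈ G.T ∧
    ∀ r : ℕ, 1 ≤ r → r ≤ m.val → G.B1pseq L (h.sig1.take r) ∉ 𝓛

/-- The payoff `γ₁^𝓛(δ,σ,τ)` of player 1 in the `𝓛`-game, for an initial
distribution `δ` with support `L`. -/
def Lval (G : Game K I J C D) (𝓛 : Set (Finset K)) (L : Finset K) (δ : FDist K)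
    (σ : Strategy1 I C) (τ : Strategy2 J D) : ℝ :=
  ⨆ n : ℕ, ∑ h : Hist K C D n, if G.LWin 𝓛 L h then G.playProb δ σ τ n h else 0

end Game

/-- The uniformly random strategy `σ_R` of player 1. -/
def randomStrat (I C : Type*) [Fintype I] [Nonempty I] : Strategy1 I C :=
  fun _ => uniform Finset.univ Finset.univ_nonempty
variable {K I J C D : Type*} [Fintype K] [Fintype I] [Fintype J] [Fintype C] [Fintype D]
  [Nonempty K] [Nonempty I] [Nonempty J] [Nonempty C] [Nonempty D]

/-- The decreasing sequence `𝓛₀ = P(K∖T)`, `𝓛_{n+1} = Φ(𝓛ₙ)`. -/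
def Game.PhiIter (G : Game K I J C D) : ℕ → Set (Finset K)
  | 0 => {L | L ∩ G.T = ∅}
  | n + 1 => G.Phi (G.PhiIter n)

namespace Hist

variable {K C D : Type*} {n : ℕ}

def snoc (h : Hist K C D n) (x : C × D × K) : Hist K C D (n + 1) :=
  ⟨h.first, Fin.snoc h.steps x⟩

def cons (k : K) (c : C) (d : D) (h : Hist K C D n) : Hist K C D (n + 1) :=
  ⟨k, Fin.cons (c, d, h.first) h.steps⟩

@[simp] lemma init_first (h : Hist K C D (n + 1)) : h.init.first = h.first := rfl

@[simp] lemma init_snoc (h : Hist K C D n) (x : C × D × K) : (h.snoc x).init = h := by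
  simp [snoc, init]

@[simp] lemma snoc_steps_last (h : Hist K C D n) (x : C × D × K) :
    (h.snoc x).steps (Fin.last n) = x := by
  simp [snoc]

lemma init_cons (k : K) (c : C) (d : D) (h : Hist K C D (n + 1)) :
    (cons k c d h).init = cons k c d h.init := by
  simp only [cons, init, mk.injEq, true_and]
  funext m
  cases m using Fin.cases <;> simp

lemma last_cons (k : K) (c : C) (d : D) : ∀ {n : ℕ} (h : Hist K C D n),
    (cons k c d h).last = h.last
  | 0, _ => rfl
  | n + 1, h => by simp [cons, last]

lemma sig1_cons (k : K) (c : C) (d : D) (h : Hist K C D n) :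
    (cons k c d h).sig1 = c :: h.sig1 := by
  simp [cons, sig1, List.ofFn_succ]

lemma sig2_cons (k : K) (c : C) (d : D) (h : Hist K C D n) :
    (cons k c d h).sig2 = d :: h.sig2 := by
  simp [cons, sig2, List.ofFn_succ]

def VisitsAfterStart (S : Finset K) (h : Hist K C D n) : Prop :=
  ∃ m : Fin n, (h.steps m).2.2 ∈ S

lemma VisitsAfterStart.snoc {S : Finset K} {h : Hist K C D n} (hS : h.VisitsAfterStart S)
    (x : C × D × K) : (h.snoc x).VisitsAfterStart S := by
  obtain ⟨m, hm⟩ := hS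
  exact ⟨m.castSucc, by simpa [Hist.snoc] using hm⟩

lemma visitsAfterStart_cons {S : Finset K} (k : K) (c : C) (d : D) (h : Hist K C D n) :
    (cons k c d h).VisitsAfterStart S ↔ h.first ∈ S ∨ h.VisitsAfterStart S := by
  simp [VisitsAfterStart, cons, Fin.exists_fin_succ]

end Hist

lemma FDist.exists_pos {X : Type*} [Fintype X] (ρ : FDist X) : ∃ x, 0 < ρ.f x := by
  obtain ⟨x, -, hx⟩ :=
    Finset.exists_lt_of_sum_lt (s := Finset.univ) (f := fun _ => 0) (g := ρ.f) (by simp [ρ.sum_one])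
  exact ⟨x, hx⟩

lemma FDist.eq_one_of_subsingleton {X : Type*} [Fintype X] [Subsingleton X] (ρ : FDist X)
    (x : X) : ρ.f x = 1 := by
  rw [← ρ.sum_one, Fintype.sum_subsingleton _ x]

namespace Game

variable {K I J C D : Type*} [Fintype K] [Fintype I] [Fintype J] [Fintype C] [Fintype D]
  (G : Game K I J C D)

lemma mem_B2 {L : Finset K} {d : D} {k : K} :
    k ∈ G.B2 L d ↔ ∃ l ∈ L, ∃ c : C, 0 < G.p l (G.act₁ c) (G.act₂ d) (c, d, k) := by
  simp [B2]

lemma exists_B2_notMem_of_notMem_Phi {𝓛 : Set (Finset K)} {L : Finset K} (hL : L ∈ 𝓛)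
    (hLT : L ∩ G.T = ∅) (hΦ : L ∉ G.Phi 𝓛) (j : J) :
    ∃ d, G.act₂ d = j ∧ G.B2 L d ∉ 𝓛 := by
  by_contra! h
  exact hΦ ⟨hL, hLT, j, h⟩

lemma step_nonneg (ρ₁ : FDist I) (ρ₂ : FDist J) (k : K) (x : C × D × K) :
    0 ≤ ∑ i, ∑ j, ρ₁.f i * ρ₂.f j * G.p k i j x :=
  Finset.sum_nonneg fun i _ => Finset.sum_nonneg fun j _ =>
    mul_nonneg (mul_nonneg (ρ₁.nonneg i) (ρ₂.nonneg j)) (G.p_nonneg _ _ _ _)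

lemma step_sum (ρ₁ : FDist I) (ρ₂ : FDist J) (k : K) :
    ∑ x : C × D × K, ∑ i, ∑ j, ρ₁.f i * ρ₂.f j * G.p k i j x = 1 := by
  rw [Finset.sum_comm]
  refine (Finset.sum_congr rfl fun i _ => ?_).trans ρ₁.sum_one
  rw [Finset.sum_comm]
  simp only [← Finset.mul_sum, G.p_sum, mul_one, ρ₂.sum_one]

lemma step_eq_of_subsingleton [Subsingleton I] (ρ₁ : FDist I) (ρ₂ : FDist J) (k : K)
    (x : C × D × K) (i : I) :
    ∑ i, ∑ j, ρ₁.f i * ρ₂.f j * G.p k i j x = ∑ j, ρ₂.f j * G.p k i j x := by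
  simp [Fintype.sum_subsingleton _ i, ρ₁.eq_one_of_subsingleton i]

lemma step_pos_of_subsingleton [Subsingleton I] (ρ₁ : FDist I) (ρ₂ : FDist J) {k k' : K}
    {c : C} {d : D} (hd : 0 < ρ₂.f (G.act₂ d))
    (hp : 0 < G.p k (G.act₁ c) (G.act₂ d) (c, d, k')) :
    0 < ∑ i, ∑ j, ρ₁.f i * ρ₂.f j * G.p k i j (c, d, k') := by
  rw [G.step_eq_of_subsingleton ρ₁ ρ₂ k _ (G.act₁ c)]
  exact Finset.sum_pos' (fun j _ => mul_nonneg (ρ₂.nonneg j) (G.p_nonneg _ _ _ _))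
    ⟨G.act₂ d, Finset.mem_univ _, mul_pos hd hp⟩

variable (δ : FDist K) (σ : Strategy1 I C) (τ : Strategy2 J D)

lemma playProb_nonneg : ∀ (n : ℕ) (h : Hist K C D n), 0 ≤ G.playProb δ σ τ n h
  | 0, _ => δ.nonneg _
  | n + 1, h => mul_nonneg (playProb_nonneg n h.init) (G.step_nonneg _ _ _ _)

lemma playProb_eq_mul_playProb_dirac : ∀ (n : ℕ) (h : Hist K C D n),
    G.playProb δ σ τ n h = δ.f h.first * G.playProb (dirac h.first) σ τ n h
  | 0, _ => by simp [playProb, dirac]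
  | n + 1, h => by
    rw [playProb, playProb, playProb_eq_mul_playProb_dirac n h.init, Hist.init_first]
    ring

lemma playProb_snoc {n : ℕ} (h : Hist K C D n) (x : C × D × K) :
    G.playProb δ σ τ (n + 1) (h.snoc x) =
      G.playProb δ σ τ n h *
        ∑ i, ∑ j, (σ h.sig1).f i * (τ h.sig2).f j * G.p h.last i j x := by
  simp [playProb]

lemma playProb_cons (k : K) (c : C) (d : D) : ∀ {n : ℕ} (h : Hist K C D n),
    G.playProb δ σ τ (n + 1) (Hist.cons k c d h) =
      δ.f k * (∑ i, ∑ j, (σ []).f i * (τ []).f j * G.p k i j (c, d, h.first)) *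
        G.playProb (dirac h.first) (fun cs => σ (c :: cs)) (fun ds => τ (d :: ds)) n h
  | 0, h => by
    simp [playProb, dirac, Hist.cons, Hist.init, Hist.sig1, Hist.sig2, Hist.last]
  | n + 1, h => by
    rw [playProb, Hist.init_cons, playProb_cons k c d h.init, Hist.sig1_cons, Hist.sig2_cons,
      Hist.last_cons]
    have hlast : (Hist.cons k c d h).steps (Fin.last (n + 1)) = h.steps (Fin.last n) := by
      simp [Hist.cons, ← Fin.succ_last]
    rw [hlast]
    conv_rhs => rw [playProb]
    rw [Hist.init_first]
    ring

lemma playProb_congr_of_subsingleton [Subsingleton I] (σ' : Strategy1 I C) :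
    ∀ (n : ℕ) (h : Hist K C D n), G.playProb δ σ τ n h = G.playProb δ σ' τ n h
  | 0, _ => rfl
  | n + 1, h => by
    obtain ⟨i, -⟩ := (σ []).exists_pos
    simp only [playProb, playProb_congr_of_subsingleton σ' n h.init,
      G.step_eq_of_subsingleton _ _ _ _ i]

lemma exists_playProb_snoc_pos {n : ℕ} {h : Hist K C D n} (hh : 0 < G.playProb δ σ τ n h) :
    ∃ x, 0 < G.playProb δ σ τ (n + 1) (h.snoc x) := by
  obtain ⟨x, -, hx⟩ := Finset.exists_lt_of_sum_lt (s := Finset.univ) (f := 0)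
    (g := fun x => ∑ i, ∑ j, (σ h.sig1).f i * (τ h.sig2).f j * G.p h.last i j x)
    (by simp [G.step_sum])
  exact ⟨x, by rw [playProb_snoc]; exact mul_pos hh hx⟩

lemma exists_playProb_dirac_pos (k : K) :
    ∀ n : ℕ, ∃ h : Hist K C D n, h.first = k ∧ 0 < G.playProb (dirac k) σ τ n h
  | 0 => ⟨⟨k, Fin.elim0⟩, rfl, by simp [playProb, dirac]⟩
  | n + 1 => by
    obtain ⟨h, rfl, hh⟩ := exists_playProb_dirac_pos k n
    obtain ⟨x, hx⟩ := G.exists_playProb_snoc_pos _ σ τ hh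
    exact ⟨h.snoc x, rfl, hx⟩

lemma exists_playProb_cons_pos [Subsingleton I] {n : ℕ} {L : Finset K} {d : D}
    (hd : 0 < (τ []).f (G.act₂ d)) {h : Hist K C D n} (hhL : h.first ∈ G.B2 L d)
    (hh : 0 < G.playProb (dirac h.first) σ (fun ds => τ (d :: ds)) n h) :
    ∃ l ∈ L, ∃ c : C, 0 < G.playProb (dirac l) σ τ (n + 1) (Hist.cons l c d h) := by
  obtain ⟨l, hl, c, hp⟩ := G.mem_B2.1 hhL
  refine ⟨l, hl, c, ?_⟩
  rw [G.playProb_cons, G.playProb_congr_of_subsingleton _ (fun cs => σ (c :: cs)) _ σ]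
  exact mul_pos (mul_pos (by simp [dirac]) (G.step_pos_of_subsingleton _ _ hd hp)) hh

/-- Induction on `n`: the action that `τ` plays first with positive probability has, as
`L ∉ Φ(𝓛ₙ₋₁)`, a signal `d` whose belief `B₂(L, d)` lies outside `𝓛ₙ₋₁` or meets `T`.
Since player 1 has one action, his strategy does not matter after the first step. -/
theorem exists_visitsAfterStart_of_notMem_PhiIter [Subsingleton I] (σ : Strategy1 I C) :
    ∀ (n : ℕ) (L : Finset K) (τ : Strategy2 J D), L ∩ G.T = ∅ →
      L ∉ G.PhiIter n → ∃ h : Hist K C D n,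
        h.first ∈ L ∧ h.VisitsAfterStart G.T ∧ 0 < G.playProb (dirac h.first) σ τ n h
  | 0, _, _, hLT, hnot => absurd hLT hnot
  | n + 1, L, τ, hLT, hnot => by
    by_cases hmem : L ∈ G.PhiIter n
    · obtain ⟨j, hj⟩ := (τ []).exists_pos
      obtain ⟨d, rfl, hM⟩ := G.exists_B2_notMem_of_notMem_Phi hmem hLT hnot j
      set τ' : Strategy2 J D := fun ds => τ (d :: ds)
      obtain ⟨h, hhM, hvis, hpos⟩ : ∃ h : Hist K C D n, h.first ∈ G.B2 L d ∧
          (h.first ∈ G.T ∨ h.VisitsAfterStart G.T) ∧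
          0 < G.playProb (dirac h.first) σ τ' n h := by
        by_cases hMT : G.B2 L d ∩ G.T = ∅
        · obtain ⟨h, hhM, hvis, hpos⟩ :=
            exists_visitsAfterStart_of_notMem_PhiIter σ n _ τ' hMT hM
          exact ⟨h, hhM, Or.inr hvis, hpos⟩
        · obtain ⟨k, hk⟩ := Finset.nonempty_iff_ne_empty.2 hMT
          obtain ⟨h, rfl, hpos⟩ := G.exists_playProb_dirac_pos σ τ' k n
          exact ⟨h, (Finset.mem_inter.1 hk).1, Or.inl (Finset.mem_inter.1 hk).2, hpos⟩
      obtain ⟨l, hl, c, hpos⟩ := G.exists_playProb_cons_pos σ τ hj hhM hpos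
      exact ⟨Hist.cons l c d h, hl, (Hist.visitsAfterStart_cons l c d h).2 hvis, hpos⟩
    · obtain ⟨h, hL, hvis, hpos⟩ :=
        exists_visitsAfterStart_of_notMem_PhiIter σ n L τ hLT hmem
      obtain ⟨x, hx⟩ := G.exists_playProb_snoc_pos _ σ τ hpos
      exact ⟨h.snoc x, hL, hvis.snoc x, hx⟩

end Game

/-- States are `0`-indexed here: the `1`-indexed states `k_m`, `2 ≤ m ≤ n+1`, are the third
components of the `n` steps of a play with `n+1` states. -/
theorem positive_reach_of_not_PhiIter_general (G : Game K I J C D)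
    (hI : ∀ i₁ i₂ : I, i₁ = i₂) (n : ℕ) (L : Finset K)
    (hLT : L ∩ G.T = ∅) (hnot : L ∉ G.PhiIter n) :
    ∀ δ : FDist K, δ.support = L →
      ∀ (σ : Strategy1 I C) (τ : Strategy2 J D),
        0 < ∑ h : Hist K C D n,
          if ∃ m : Fin n, (h.steps m).2.2 ∈ G.T then G.playProb δ σ τ n h else 0 := by
  intro δ hδ σ τ
  have : Subsingleton I := ⟨hI⟩
  obtain ⟨h, hL, hvis, hpos⟩ := G.exists_visitsAfterStart_of_notMem_PhiIter σ n L τ hLT hnot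
  have hδh : 0 < δ.f h.first := by
    rw [← hδ] at hL
    simpa [FDist.support] using hL
  refine Finset.sum_pos' (fun g _ => ?_) ⟨h, Finset.mem_univ h, ?_⟩
  · split_ifs
    exacts [G.playProb_nonneg δ σ τ n g, le_rfl]
  · rw [if_pos (show ∃ m : Fin n, (h.steps m).2.2 ∈ G.T from hvis),
      G.playProb_eq_mul_playProb_dirac]
    exact mul_pos hδh hpos

/-- when player 1 has a single action, from every support in
`𝓚ₙ = P(K∖T) ∖ 𝓛ₙ`, against every strategy of player 2, the play visits a
target state at some step `m` with `2 ≤ m ≤ n+1` with positive probability.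
(States are `0`-indexed here: the `1`-indexed states `k_m`, `2 ≤ m ≤ n+1`, are
the third components of the `n` steps of a play with `n+1` states.) -/
theorem positive_reach_of_not_PhiIter (G : Game K I J C D)
    (hI : ∀ i₁ i₂ : I, i₁ = i₂) (n : ℕ) (L : Finset K)
    (hLT : L ∩ G.T = ∅) (hnot : L ∉ G.PhiIter n) (hL : L.Nonempty) :
    ∀ δ : FDist K, δ.support = L →
      ∀ (σ : Strategy1 I C) (τ : Strategy2 J D),
        0 < ∑ h : Hist K C D n,
          if ∃ m : Fin n, (h.steps m).2.2 ∈ G.T then G.playProb δ σ τ n h else 0 :=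
  positive_reach_of_not_PhiIter_general G hI n L hLT hnot
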